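/- Weighted Poincaré inequality for a single equation in ℝⁿ: let u ∈ C³(ℝⁿ) solve −Δu = H(u) with H ∈ C¹(ℝ), and suppose u is stable in the sense that ∫ H'(u)φ² ≤ ∫ ‖∇φ‖² for all φ ∈ C_c¹(ℝⁿ). Then for every η ∈ C_c¹(ℝⁿ): ∫ (‖Hess u‖² − ‖∇‖∇u‖‖²)·η² ≤ ∫ ‖∇u‖²·‖∇η‖². -/

import Mathlib

open MeasureTheory

noncomputable def lap {n : ℕ} (f : EuclideanSpace ℝ (Fin n) → ℝ)
    (x : EuclideanSpace ℝ (Fin n)) : ℝ :=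
  ∑ i : Fin n,
    fderiv ℝ (fun y => fderiv ℝ f y (EuclideanSpace.single i 1)) x
      (EuclideanSpace.single i 1)

noncomputable def hessFrobSq {n : ℕ} (f : EuclideanSpace ℝ (Fin n) → ℝ)
    (p : EuclideanSpace ℝ (Fin n)) : ℝ :=
  ∑ k : Fin n, ‖gradient (fun x => gradient f x k) p‖ ^ 2

/-!
`|∇u|` is only Lipschitz, so stability is tested with the `C¹` function `√(|∇u|² + c) · η`,
`c > 0`. Testing the differentiated equation `-Δ ∂ᵢu = H'(u) ∂ᵢu` against `∂ᵢu · η²` and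
integrating by parts gives the Bochner-type identity
`∫ H'(u) |∇u|² η² = ∫ |D²u|² η² + ∫ η ∇|∇u|² · ∇η`; subtracting it from the stability inequality
leaves
`∫ |D²u|² η² - ∫ η² |∇|∇u|²|² / (4 (|∇u|² + c)) ≤ ∫ |∇u|² |∇η|² + c (∫ |∇η|² - ∫ H'(u) η²)`.
Since `|∇|∇u|²|² = 4 |∇u|² |∇|∇u||²`, the subtracted integrand is at most `|∇|∇u||² η²`, and
`c → 0` gives the claim. Kato's inequality `|∇|∇u|| ≤ |D²u|` keeps the integrand of the claim
nonnegative, so no integrability of `|∇|∇u||²` is needed.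
-/

open Filter Topology

theorem le_of_forall_pos_le_add_mul {a b K : ℝ} (h : ∀ c > 0, a ≤ b + c * K) : a ≤ b := by
  have hlim : Tendsto (fun c => b + c * K) (𝓝[>] 0) (𝓝 b) := by
    have : Continuous fun c : ℝ => b + c * K := by fun_prop
    simpa using (this.tendsto 0).mono_left nhdsWithin_le_nhds
  exact ge_of_tendsto hlim (eventually_nhdsWithin_of_forall h)

theorem Continuous.integrable_of_eq_zero_of_notMem_tsupport {X : Type*} [TopologicalSpace X]
    [MeasurableSpace X] [OpensMeasurableSpace X] {μ : Measure X} [IsFiniteMeasureOnCompacts μ]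
    {f g : X → ℝ} (hf : Continuous f) (hg : HasCompactSupport g)
    (h : ∀ x ∉ tsupport g, f x = 0) : Integrable f μ :=
  hf.integrable_of_hasCompactSupport <| hg.mono' fun x hx => by_contra fun hx' => hx (h x hx')

section PartialDeriv

variable {ι : Type*} [DecidableEq ι]

noncomputable def partialDeriv (i : ι) (f : EuclideanSpace ℝ ι → ℝ) (x : EuclideanSpace ℝ ι) :
    ℝ :=
  fderiv ℝ f x (EuclideanSpace.single i 1)

notation "∂[" i "]" => partialDeriv i

theorem partialDeriv_eq_zero_of_notMem_tsupport {f : EuclideanSpace ℝ ι → ℝ}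
    {x : EuclideanSpace ℝ ι} (hx : x ∉ tsupport f) (i : ι) : ∂[i] f x = 0 := by
  simp [partialDeriv, fderiv_of_notMem_tsupport ℝ hx]

variable [Fintype ι] {f g : EuclideanSpace ℝ ι → ℝ} {x : EuclideanSpace ℝ ι}

theorem gradient_apply_eq_partialDeriv (f : EuclideanSpace ℝ ι → ℝ) (x : EuclideanSpace ℝ ι)
    (i : ι) : gradient f x i = ∂[i] f x := by
  rw [gradient, partialDeriv, ← InnerProductSpace.toDual_symm_apply, real_inner_comm,
    EuclideanSpace.inner_single_left]
  simp

theorem norm_gradient_sq_eq_sum (f : EuclideanSpace ℝ ι → ℝ) (x : EuclideanSpace ℝ ι) :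
    ‖gradient f x‖ ^ 2 = ∑ i, ∂[i] f x ^ 2 := by
  rw [EuclideanSpace.norm_eq, Real.sq_sqrt (by positivity)]
  simp [gradient_apply_eq_partialDeriv]

theorem ContDiff.partialDeriv {m k : WithTop ℕ∞} (hf : ContDiff ℝ k f) (hmk : m + 1 ≤ k)
    (i : ι) : ContDiff ℝ m (∂[i] f) :=
  (ContinuousLinearMap.apply ℝ ℝ (EuclideanSpace.single i (1 : ℝ))).contDiff.comp
    (hf.fderiv_right hmk)

theorem continuous_partialDeriv (hf : ContDiff ℝ 1 f) (i : ι) : Continuous (∂[i] f) :=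
  (hf.partialDeriv (m := 0) (by simp) i).continuous

theorem IsLocalMin.partialDeriv_eq_zero (h : IsLocalMin f x) (i : ι) : ∂[i] f x = 0 := by
  simp [partialDeriv, h.fderiv_eq_zero]

theorem partialDeriv_mul (hf : DifferentiableAt ℝ f x) (hg : DifferentiableAt ℝ g x)
    (i : ι) : ∂[i] (fun y => f y * g y) x = ∂[i] f x * g x + f x * ∂[i] g x := by
  simp only [partialDeriv, fderiv_fun_mul hf hg, add_apply, smul_apply, smul_eq_mul]
  ring

theorem partialDeriv_sum {κ : Type*} {s : Finset κ} {A : κ → EuclideanSpace ℝ ι → ℝ}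
    (h : ∀ j ∈ s, DifferentiableAt ℝ (A j) x) (i : ι) :
    ∂[i] (fun y => ∑ j ∈ s, A j y) x = ∑ j ∈ s, ∂[i] (A j) x := by
  simp [partialDeriv, fderiv_fun_sum h]

theorem partialDeriv_comp {H : ℝ → ℝ} (hH : DifferentiableAt ℝ H (f x))
    (hf : DifferentiableAt ℝ f x) (i : ι) :
    ∂[i] (fun y => H (f y)) x = deriv H (f x) * ∂[i] f x := by
  rw [partialDeriv, show (fun y => H (f y)) = H ∘ f from rfl,
    (hH.hasDerivAt.comp_hasFDerivAt x hf.hasFDerivAt).fderiv]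
  simp [partialDeriv]

theorem partialDeriv_comm (hf : ContDiff ℝ 2 f) (i j : ι) :
    ∂[i] (∂[j] f) = ∂[j] (∂[i] f) := by
  ext x
  have hd : DifferentiableAt ℝ (fderiv ℝ f) x :=
    (hf.fderiv_right (m := 1) (by norm_num)).differentiable one_ne_zero x
  have key (i j : ι) : ∂[i] (∂[j] f) x =
      fderiv ℝ (fderiv ℝ f) x (EuclideanSpace.single i 1) (EuclideanSpace.single j 1) := by
    unfold partialDeriv
    rw [fderiv_clm_apply hd (differentiableAt_const _)]
    simp
  rw [key, key, hf.contDiffAt.isSymmSndFDerivAt (by simp)]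

theorem integral_mul_partialDeriv_eq_neg (hf : ContDiff ℝ 1 f) (hfc : HasCompactSupport f)
    (hg : ContDiff ℝ 1 g) (i : ι) :
    ∫ x, f x * ∂[i] g x = -∫ x, ∂[i] f x * g x := by
  have hf' := continuous_partialDeriv hf i
  have hg' := continuous_partialDeriv hg i
  refine integral_mul_fderiv_eq_neg_fderiv_mul_of_integrable ?_ ?_ ?_
    (fun x _ => hf.differentiable one_ne_zero x) (fun x _ => hg.differentiable one_ne_zero x)
  · exact (hf'.mul hg.continuous).integrable_of_eq_zero_of_notMem_tsupport hfc fun x hx => by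
      simp [partialDeriv_eq_zero_of_notMem_tsupport hx]
  · exact (hf.continuous.mul hg').integrable_of_hasCompactSupport hfc.mul_right
  · exact (hf.continuous.mul hg.continuous).integrable_of_hasCompactSupport hfc.mul_right

theorem partialDeriv_add_const (c : ℝ) (i : ι) :
    ∂[i] (fun y => f y + c) x = ∂[i] f x := by
  simp [partialDeriv]

theorem partialDeriv_sqrt (hf : DifferentiableAt ℝ f x) (hx : f x ≠ 0) (i : ι) :
    ∂[i] (fun y => √(f y)) x = ∂[i] f x / (2 * √(f x)) := by
  rw [partialDeriv, (hf.hasFDerivAt.sqrt hx).fderiv]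
  simp [partialDeriv, div_eq_inv_mul]

theorem integral_sum_partialDeriv_mul_eq_neg (hf : ContDiff ℝ 1 f) (hfc : HasCompactSupport f)
    (hg : ContDiff ℝ 2 g) :
    ∫ x, ∑ j, ∂[j] f x * ∂[j] g x = -∫ x, f x * ∑ j, ∂[j] (∂[j] g) x := by
  have hg' (j : ι) : ContDiff ℝ 1 (∂[j] g) := hg.partialDeriv (by norm_num) j
  have hfg (j : ι) : Integrable fun x => ∂[j] f x * ∂[j] g x :=
    ((continuous_partialDeriv hf j).mul (hg' j).continuous).integrable_of_eq_zero_of_notMem_tsupport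
      hfc fun x hx => by simp [partialDeriv_eq_zero_of_notMem_tsupport hx]
  have hfg' (j : ι) : Integrable fun x => f x * ∂[j] (∂[j] g) x :=
    (hf.continuous.mul (continuous_partialDeriv (hg' j) j)).integrable_of_hasCompactSupport
      hfc.mul_right
  simp_rw [Finset.mul_sum]
  rw [integral_finsetSum _ fun j _ => hfg j, integral_finsetSum _ fun j _ => hfg' j,
    ← Finset.sum_neg_distrib]
  refine Finset.sum_congr rfl fun j _ => ?_
  rw [integral_mul_partialDeriv_eq_neg hf hfc (hg' j), neg_neg]

noncomputable def gradNormSq (u : EuclideanSpace ℝ ι → ℝ) (x : EuclideanSpace ℝ ι) : ℝ :=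
  ∑ i, ∂[i] u x ^ 2

variable {u : EuclideanSpace ℝ ι → ℝ}

theorem gradNormSq_nonneg (u : EuclideanSpace ℝ ι → ℝ) (x : EuclideanSpace ℝ ι) :
    0 ≤ gradNormSq u x :=
  Finset.sum_nonneg fun _ _ => sq_nonneg _

theorem norm_gradient_sq_eq_gradNormSq (u : EuclideanSpace ℝ ι → ℝ) (x : EuclideanSpace ℝ ι) :
    ‖gradient u x‖ ^ 2 = gradNormSq u x :=
  norm_gradient_sq_eq_sum u x

theorem norm_gradient_eq_sqrt_gradNormSq (u : EuclideanSpace ℝ ι → ℝ) :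
    (fun y => ‖gradient u y‖) = fun y => √(gradNormSq u y) := by
  ext y
  rw [← norm_gradient_sq_eq_gradNormSq, Real.sqrt_sq (norm_nonneg _)]

theorem ContDiff.gradNormSq {m k : WithTop ℕ∞} (hu : ContDiff ℝ k u) (hmk : m + 1 ≤ k) :
    ContDiff ℝ m (gradNormSq u) :=
  ContDiff.sum fun i _ => (hu.partialDeriv hmk i).pow 2

theorem partialDeriv_gradNormSq (hu : ContDiff ℝ 2 u) (x : EuclideanSpace ℝ ι) (j : ι) :
    ∂[j] (gradNormSq u) x = 2 * ∑ i, ∂[i] u x * ∂[j] (∂[i] u) x := by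
  have hd (i : ι) : DifferentiableAt ℝ (∂[i] u) x :=
    (hu.partialDeriv (m := 1) (by norm_num) i).differentiable one_ne_zero x
  unfold gradNormSq
  rw [partialDeriv_sum (A := fun i y => ∂[i] u y ^ 2) fun i _ => (hd i).pow 2, Finset.mul_sum]
  refine Finset.sum_congr rfl fun i _ => ?_
  simp_rw [sq, partialDeriv_mul (hd i) (hd i)]
  ring

theorem partialDeriv_gradNormSq_eq_zero (hx : gradNormSq u x = 0) (j : ι) :
    ∂[j] (gradNormSq u) x = 0 :=
  IsLocalMin.partialDeriv_eq_zero (Eventually.of_forall fun y => hx ▸ gradNormSq_nonneg u y) j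

theorem sum_sq_partialDeriv_gradNormSq_le (hu : ContDiff ℝ 2 u) (x : EuclideanSpace ℝ ι) :
    ∑ j, ∂[j] (gradNormSq u) x ^ 2 ≤ 4 * gradNormSq u x * ∑ i, ∑ j, ∂[j] (∂[i] u) x ^ 2 := by
  have cauchySchwarz (j : ι) :
      ∂[j] (gradNormSq u) x ^ 2 ≤ 4 * gradNormSq u x * ∑ i, ∂[j] (∂[i] u) x ^ 2 := by
    rw [partialDeriv_gradNormSq hu, gradNormSq]
    linear_combination 4 * Finset.sum_mul_sq_le_sq_mul_sq Finset.univ (fun i => ∂[i] u x)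
      (fun i => ∂[j] (∂[i] u) x)
  calc ∑ j, ∂[j] (gradNormSq u) x ^ 2
      ≤ ∑ j, 4 * gradNormSq u x * ∑ i, ∂[j] (∂[i] u) x ^ 2 :=
        Finset.sum_le_sum fun j _ => cauchySchwarz j
    _ = 4 * gradNormSq u x * ∑ i, ∑ j, ∂[j] (∂[i] u) x ^ 2 := by
      rw [← Finset.mul_sum, Finset.sum_comm]

theorem four_mul_gradNormSq_mul_norm_gradient_norm_gradient_sq (hu : ContDiff ℝ 2 u)
    (x : EuclideanSpace ℝ ι) :
    4 * gradNormSq u x * ‖gradient (fun y => ‖gradient u y‖) x‖ ^ 2 =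
      ∑ j, ∂[j] (gradNormSq u) x ^ 2 := by
  rcases (gradNormSq_nonneg u x).eq_or_lt with hx | hx
  · simp [← hx, partialDeriv_gradNormSq_eq_zero hx.symm]
  have hd : DifferentiableAt ℝ (gradNormSq u) x :=
    (hu.gradNormSq (m := 1) (by norm_num)).differentiable one_ne_zero x
  rw [norm_gradient_eq_sqrt_gradNormSq, norm_gradient_sq_eq_sum, Finset.mul_sum]
  refine Finset.sum_congr rfl fun j _ => ?_
  rw [partialDeriv_sqrt hd hx.ne', div_pow, mul_pow, Real.sq_sqrt hx.le]
  field_simp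
  ring

theorem norm_gradient_norm_gradient_sq_le (hu : ContDiff ℝ 2 u) (x : EuclideanSpace ℝ ι) :
    ‖gradient (fun y => ‖gradient u y‖) x‖ ^ 2 ≤ ∑ i, ∑ j, ∂[j] (∂[i] u) x ^ 2 := by
  rcases (gradNormSq_nonneg u x).eq_or_lt with hx | hx
  · have h0 : ‖gradient u x‖ = 0 := by
      rw [← sq_eq_zero_iff, norm_gradient_sq_eq_gradNormSq, hx]
    -- `fderiv` vanishes at a local minimum even where the function is not differentiable
    have hmin : IsLocalMin (fun y => ‖gradient u y‖) x :=
      Eventually.of_forall fun y => by simp only [h0]; positivity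
    have h0' : ‖gradient (fun y => ‖gradient u y‖) x‖ ^ 2 = 0 := by
      simp [norm_gradient_sq_eq_sum, hmin.partialDeriv_eq_zero]
    rw [h0']
    positivity
  refine le_of_mul_le_mul_left ?_ (by positivity : 0 < 4 * gradNormSq u x)
  rw [four_mul_gradNormSq_mul_norm_gradient_norm_gradient_sq hu]
  exact sum_sq_partialDeriv_gradNormSq_le hu x

/-- `‖∇√(|∇u|² + c)‖²`, which increases to `‖∇|∇u|‖²` as `c ↓ 0`. -/
noncomputable def normGradNormGradSqApprox (u : EuclideanSpace ℝ ι → ℝ) (c : ℝ)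
    (x : EuclideanSpace ℝ ι) : ℝ :=
  (∑ j, ∂[j] (gradNormSq u) x ^ 2) / (4 * (gradNormSq u x + c))

theorem normGradNormGradSqApprox_le (hu : ContDiff ℝ 2 u) {c : ℝ} (hc : 0 < c)
    (x : EuclideanSpace ℝ ι) :
    normGradNormGradSqApprox u c x ≤ ‖gradient (fun y => ‖gradient u y‖) x‖ ^ 2 := by
  have hW := gradNormSq_nonneg u x
  rw [normGradNormGradSqApprox, ← four_mul_gradNormSq_mul_norm_gradient_norm_gradient_sq hu,
    div_le_iff₀ (by positivity)]
  nlinarith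

theorem continuous_normGradNormGradSqApprox (hu : ContDiff ℝ 2 u) {c : ℝ} (hc : 0 < c) :
    Continuous (normGradNormGradSqApprox u c) := by
  have hW := hu.gradNormSq (m := 1) (by norm_num)
  have hWd (j : ι) := continuous_partialDeriv hW j
  refine (by fun_prop : Continuous _).div (by fun_prop) fun x => ?_
  have := gradNormSq_nonneg u x
  positivity

theorem norm_gradient_sqrt_mul_sq {h η : EuclideanSpace ℝ ι → ℝ} (hh : DifferentiableAt ℝ h x)
    (hpos : 0 < h x) (hη : DifferentiableAt ℝ η x) :
    ‖gradient (fun y => √(h y) * η y) x‖ ^ 2 =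
      η x ^ 2 * ((∑ j, ∂[j] h x ^ 2) / (4 * h x)) + η x * ∑ j, ∂[j] h x * ∂[j] η x +
        h x * ∑ j, ∂[j] η x ^ 2 := by
  have hsq : √(h x) ^ 2 = h x := Real.sq_sqrt hpos.le
  rw [norm_gradient_sq_eq_sum, Finset.sum_div, Finset.mul_sum, Finset.mul_sum, Finset.mul_sum,
    ← Finset.sum_add_distrib, ← Finset.sum_add_distrib]
  refine Finset.sum_congr rfl fun j _ => ?_
  rw [partialDeriv_mul (hh.sqrt hpos.ne') hη, partialDeriv_sqrt hh hpos.ne']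
  field_simp
  rw [hsq]
  ring

theorem sum_sum_partialDeriv_mul_sq_mul_partialDeriv {η : EuclideanSpace ℝ ι → ℝ}
    (hu : ContDiff ℝ 2 u) (hη : DifferentiableAt ℝ η x) :
    ∑ i, ∑ j, ∂[j] (fun y => ∂[i] u y * η y ^ 2) x * ∂[j] (∂[i] u) x =
      (∑ i, ∑ j, ∂[j] (∂[i] u) x ^ 2) * η x ^ 2 +
        η x * ∑ j, ∂[j] (gradNormSq u) x * ∂[j] η x := by
  have hd (i : ι) : DifferentiableAt ℝ (∂[i] u) x :=
    (hu.partialDeriv (m := 1) (by norm_num) i).differentiable one_ne_zero x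
  have hη2 (j : ι) : ∂[j] (fun y => η y ^ 2) x = 2 * η x * ∂[j] η x := by
    simp_rw [sq, partialDeriv_mul hη hη]
    ring
  have hterm (i j : ι) : ∂[j] (fun y => ∂[i] u y * η y ^ 2) x * ∂[j] (∂[i] u) x =
      ∂[j] (∂[i] u) x ^ 2 * η x ^ 2 + η x * (2 * ∂[i] u x * ∂[j] (∂[i] u) x * ∂[j] η x) := by
    rw [partialDeriv_mul (g := fun y => η y ^ 2) (hd i) (hη.pow 2), hη2]
    ring
  simp_rw [hterm, Finset.sum_add_distrib, partialDeriv_gradNormSq hu, Finset.sum_mul,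
    Finset.mul_sum]
  rw [Finset.sum_comm (f := fun i j => η x * (2 * ∂[i] u x * ∂[j] (∂[i] u) x * ∂[j] η x))]
  congr 1
  refine Finset.sum_congr rfl fun j _ => ?_
  simp_rw [Finset.sum_mul, Finset.mul_sum]
  refine Finset.sum_congr rfl fun i _ => ?_
  ring

end PartialDeriv

section Equation

variable {n : ℕ} {u η : EuclideanSpace ℝ (Fin n) → ℝ} {H : ℝ → ℝ}

theorem lap_eq_sum (f : EuclideanSpace ℝ (Fin n) → ℝ) (x : EuclideanSpace ℝ (Fin n)) :
    lap f x = ∑ i, ∂[i] (∂[i] f) x :=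
  rfl

theorem hessFrobSq_eq_sum (u : EuclideanSpace ℝ (Fin n) → ℝ) (x : EuclideanSpace ℝ (Fin n)) :
    hessFrobSq u x = ∑ i, ∑ j, ∂[j] (∂[i] u) x ^ 2 := by
  simp_rw [hessFrobSq, gradient_apply_eq_partialDeriv, norm_gradient_sq_eq_sum]

theorem continuous_hessFrobSq (hu : ContDiff ℝ 2 u) : Continuous (hessFrobSq u) := by
  have hvv (i j : Fin n) := continuous_partialDeriv (hu.partialDeriv (by norm_num) i) j
  simp_rw [funext (hessFrobSq_eq_sum u)]
  fun_prop

theorem lap_partialDeriv (hu : ContDiff ℝ 3 u) (i : Fin n) (x : EuclideanSpace ℝ (Fin n)) :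
    lap (∂[i] u) x = ∂[i] (lap u) x := by
  have hu2 : ContDiff ℝ 2 u := hu.of_le (by norm_num)
  have hv (j : Fin n) : ContDiff ℝ 2 (∂[j] u) := hu.partialDeriv (by norm_num) j
  have hd (j : Fin n) : DifferentiableAt ℝ (∂[j] (∂[j] u)) x :=
    ((hv j).partialDeriv (m := 1) (by norm_num) j).differentiable one_ne_zero x
  rw [lap_eq_sum, show lap u = fun y => ∑ j, ∂[j] (∂[j] u) y from rfl,
    partialDeriv_sum fun j _ => hd j]
  refine Finset.sum_congr rfl fun j _ => ?_
  rw [partialDeriv_comm hu2 j i, partialDeriv_comm (hv j) j i]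

theorem lap_partialDeriv_of_eq (hu : ContDiff ℝ 3 u) (hH : ContDiff ℝ 1 H)
    (heq : ∀ x, -lap u x = H (u x)) (i : Fin n) (x : EuclideanSpace ℝ (Fin n)) :
    lap (∂[i] u) x = -(deriv H (u x) * ∂[i] u x) := by
  have hlap : lap u = fun y => (-H) (u y) := funext fun y => by simp [← heq y]
  rw [lap_partialDeriv hu, hlap,
    partialDeriv_comp (hH.differentiable one_ne_zero).neg.differentiableAt
      (hu.differentiable (by norm_num) x), deriv.neg']
  ring

theorem integral_deriv_mul_partialDeriv_sq_mul_sq (hu : ContDiff ℝ 3 u) (hH : ContDiff ℝ 1 H)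
    (heq : ∀ x, -lap u x = H (u x)) (hη : ContDiff ℝ 1 η) (hηc : HasCompactSupport η)
    (i : Fin n) :
    ∫ x, deriv H (u x) * ∂[i] u x ^ 2 * η x ^ 2 =
      ∫ x, ∑ j, ∂[j] (fun y => ∂[i] u y * η y ^ 2) x * ∂[j] (∂[i] u) x := by
  have hv : ContDiff ℝ 2 (∂[i] u) := hu.partialDeriv (by norm_num) i
  have hφ : ContDiff ℝ 1 fun y => ∂[i] u y * η y ^ 2 :=
    (hv.of_le (by norm_num)).mul (hη.pow 2)
  have hφc : HasCompactSupport fun y => ∂[i] u y * η y ^ 2 :=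
    hηc.mono fun x hx hx0 => hx (by simp [hx0])
  rw [integral_sum_partialDeriv_mul_eq_neg hφ hφc hv, ← integral_neg]
  congr 1 with x
  rw [← lap_eq_sum, lap_partialDeriv_of_eq hu hH heq]
  ring

theorem integral_deriv_mul_gradNormSq_mul_sq (hu : ContDiff ℝ 3 u) (hH : ContDiff ℝ 1 H)
    (heq : ∀ x, -lap u x = H (u x)) (hη : ContDiff ℝ 1 η) (hηc : HasCompactSupport η) :
    ∫ x, deriv H (u x) * gradNormSq u x * η x ^ 2 =
      (∫ x, hessFrobSq u x * η x ^ 2) + ∫ x, η x * ∑ j, ∂[j] (gradNormSq u) x * ∂[j] η x := by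
  have hu2 : ContDiff ℝ 2 u := hu.of_le (by norm_num)
  have hv1 (i : Fin n) : ContDiff ℝ 1 (∂[i] u) := hu.partialDeriv (by norm_num) i
  have hφ (i : Fin n) : ContDiff ℝ 1 fun y => ∂[i] u y * η y ^ 2 := (hv1 i).mul (hη.pow 2)
  have hφc (i : Fin n) : HasCompactSupport fun y => ∂[i] u y * η y ^ 2 :=
    hηc.mono fun x hx hx0 => hx (by simp [hx0])
  have hvvc (i j : Fin n) := continuous_partialDeriv (hv1 i) j
  have hφd (i j : Fin n) := continuous_partialDeriv (hφ i) j
  have hWd (j : Fin n) := continuous_partialDeriv (hu.gradNormSq (m := 1) (by norm_num)) j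
  have hηd (j : Fin n) := continuous_partialDeriv hη j
  have hS := continuous_hessFrobSq hu2
  calc ∫ x, deriv H (u x) * gradNormSq u x * η x ^ 2
      = ∑ i, ∫ x, deriv H (u x) * ∂[i] u x ^ 2 * η x ^ 2 := by
        rw [← integral_finsetSum]
        · simp_rw [gradNormSq, Finset.mul_sum, Finset.sum_mul]
        · exact fun i _ => (by fun_prop : Continuous _).integrable_of_eq_zero_of_notMem_tsupport
            hηc fun x hx => by simp [image_eq_zero_of_notMem_tsupport hx]
    _ = ∑ i, ∫ x, ∑ j, ∂[j] (fun y => ∂[i] u y * η y ^ 2) x * ∂[j] (∂[i] u) x :=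
        Finset.sum_congr rfl fun i _ => integral_deriv_mul_partialDeriv_sq_mul_sq hu hH heq hη hηc i
    _ = ∫ x, ∑ i, ∑ j, ∂[j] (fun y => ∂[i] u y * η y ^ 2) x * ∂[j] (∂[i] u) x := by
        refine (integral_finsetSum _ fun i _ => ?_).symm
        refine (by fun_prop : Continuous _).integrable_of_eq_zero_of_notMem_tsupport
          (hφc i) fun x hx => by simp [partialDeriv_eq_zero_of_notMem_tsupport hx]
    _ = ∫ x, (hessFrobSq u x * η x ^ 2 + η x * ∑ j, ∂[j] (gradNormSq u) x * ∂[j] η x) := by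
        simp_rw [sum_sum_partialDeriv_mul_sq_mul_partialDeriv hu2 (hη.differentiable one_ne_zero _),
          hessFrobSq_eq_sum]
    _ = _ := by
        refine integral_add ?_ ?_ <;>
        refine (by fun_prop : Continuous _).integrable_of_eq_zero_of_notMem_tsupport
          hηc fun x hx => by simp [image_eq_zero_of_notMem_tsupport hx]

theorem integral_deriv_mul_gradNormSq_add_mul_sq_le (hu : ContDiff ℝ 3 u)
    (hstable : ∀ φ : EuclideanSpace ℝ (Fin n) → ℝ,
      ContDiff ℝ 1 φ → HasCompactSupport φ →
      (∫ x, deriv H (u x) * φ x ^ 2) ≤ ∫ x, ‖gradient φ x‖ ^ 2)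
    (hη : ContDiff ℝ 1 η) (hηc : HasCompactSupport η) {c : ℝ} (hc : 0 < c) :
    ∫ x, deriv H (u x) * ((gradNormSq u x + c) * η x ^ 2) ≤
      ∫ x, (η x ^ 2 * normGradNormGradSqApprox u c x +
        η x * ∑ j, ∂[j] (gradNormSq u) x * ∂[j] η x +
          (gradNormSq u x + c) * ∑ j, ∂[j] η x ^ 2) := by
  have hW : ContDiff ℝ 1 fun y => gradNormSq u y + c :=
    (hu.gradNormSq (by norm_num)).add contDiff_const
  have hpos (y : EuclideanSpace ℝ (Fin n)) : 0 < gradNormSq u y + c := by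
    have := gradNormSq_nonneg u y
    positivity
  have hφ : ContDiff ℝ 1 fun y => √(gradNormSq u y + c) * η y :=
    (hW.sqrt fun y => (hpos y).ne').mul hη
  convert hstable _ hφ hηc.mul_left using 2 <;> ext x
  · rw [mul_pow, Real.sq_sqrt (hpos x).le]
  · rw [norm_gradient_sqrt_mul_sq (hW.differentiable one_ne_zero x) (hpos x)
      (hη.differentiable one_ne_zero x)]
    simp_rw [partialDeriv_add_const, normGradNormGradSqApprox]

theorem integral_deriv_mul_gradNormSq_mul_sq_add_const_mul_le (hu : ContDiff ℝ 3 u)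
    (hH : ContDiff ℝ 1 H)
    (hstable : ∀ φ : EuclideanSpace ℝ (Fin n) → ℝ,
      ContDiff ℝ 1 φ → HasCompactSupport φ →
      (∫ x, deriv H (u x) * φ x ^ 2) ≤ ∫ x, ‖gradient φ x‖ ^ 2)
    (hη : ContDiff ℝ 1 η) (hηc : HasCompactSupport η) {c : ℝ} (hc : 0 < c) :
    (∫ x, deriv H (u x) * gradNormSq u x * η x ^ 2) + c * ∫ x, deriv H (u x) * η x ^ 2 ≤
      (∫ x, η x ^ 2 * normGradNormGradSqApprox u c x) +
        (∫ x, η x * ∑ j, ∂[j] (gradNormSq u) x * ∂[j] η x) +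
        (∫ x, gradNormSq u x * ∑ j, ∂[j] η x ^ 2) + c * ∫ x, ∑ j, ∂[j] η x ^ 2 := by
  have hW := hu.gradNormSq (m := 1) (by norm_num)
  have hWd (j : Fin n) := continuous_partialDeriv hW j
  have hηd (j : Fin n) := continuous_partialDeriv hη j
  have hK := continuous_normGradNormGradSqApprox (hu.of_le (by norm_num)) hc
  have int (f : EuclideanSpace ℝ (Fin n) → ℝ) (hf : Continuous f)
      (h : ∀ x ∉ tsupport η, f x = 0) : Integrable f :=
    hf.integrable_of_eq_zero_of_notMem_tsupport hηc h
  have iA := int (fun x => deriv H (u x) * gradNormSq u x * η x ^ 2) (by fun_prop) fun x hx => by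
    simp [image_eq_zero_of_notMem_tsupport hx]
  have iB := int (fun x => deriv H (u x) * η x ^ 2) (by fun_prop) fun x hx => by
    simp [image_eq_zero_of_notMem_tsupport hx]
  have iP := int (fun x => η x ^ 2 * normGradNormGradSqApprox u c x) (by fun_prop)
    fun x hx => by simp [image_eq_zero_of_notMem_tsupport hx]
  have iC := int (fun x => η x * ∑ j, ∂[j] (gradNormSq u) x * ∂[j] η x) (by fun_prop)
    fun x hx => by simp [image_eq_zero_of_notMem_tsupport hx]
  have iQ := int (fun x => ∑ j, ∂[j] η x ^ 2) (by fun_prop) fun x hx => by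
    simp [partialDeriv_eq_zero_of_notMem_tsupport hx]
  have iR := int (fun x => gradNormSq u x * ∑ j, ∂[j] η x ^ 2) (by fun_prop) fun x hx => by
    simp [partialDeriv_eq_zero_of_notMem_tsupport hx]
  convert integral_deriv_mul_gradNormSq_add_mul_sq_le hu hstable hη hηc hc using 1
  · rw [← integral_const_mul, ← integral_add iA (iB.const_mul c)]
    congr 1 with x
    ring
  · rw [← integral_const_mul, ← integral_add iP iC, ← integral_add (iP.fun_add iC) iR,
      ← integral_add ((iP.fun_add iC).fun_add iR) (iQ.const_mul c)]
    congr 1 with x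
    ring

theorem integral_hessFrobSq_sub_mul_sq_le (hu : ContDiff ℝ 3 u) (hH : ContDiff ℝ 1 H)
    (heq : ∀ x, -lap u x = H (u x))
    (hstable : ∀ φ : EuclideanSpace ℝ (Fin n) → ℝ,
      ContDiff ℝ 1 φ → HasCompactSupport φ →
      (∫ x, deriv H (u x) * φ x ^ 2) ≤ ∫ x, ‖gradient φ x‖ ^ 2)
    (hη : ContDiff ℝ 1 η) (hηc : HasCompactSupport η) {c : ℝ} (hc : 0 < c) :
    ∫ x, (hessFrobSq u x - normGradNormGradSqApprox u c x) * η x ^ 2 ≤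
      (∫ x, ‖gradient u x‖ ^ 2 * ‖gradient η x‖ ^ 2) +
        c * ((∫ x, ‖gradient η x‖ ^ 2) - ∫ x, deriv H (u x) * η x ^ 2) := by
  have hu2 : ContDiff ℝ 2 u := hu.of_le (by norm_num)
  have hK := continuous_normGradNormGradSqApprox hu2 hc
  have hS := continuous_hessFrobSq hu2
  have iS : Integrable fun x => hessFrobSq u x * η x ^ 2 :=
    (by fun_prop : Continuous _).integrable_of_eq_zero_of_notMem_tsupport hηc fun x hx => by
      simp [image_eq_zero_of_notMem_tsupport hx]
  have iP : Integrable fun x => η x ^ 2 * normGradNormGradSqApprox u c x :=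
    (by fun_prop : Continuous _).integrable_of_eq_zero_of_notMem_tsupport hηc fun x hx => by
      simp [image_eq_zero_of_notMem_tsupport hx]
  have hsplit : ∫ x, (hessFrobSq u x - normGradNormGradSqApprox u c x) * η x ^ 2 =
      (∫ x, hessFrobSq u x * η x ^ 2) - ∫ x, η x ^ 2 * normGradNormGradSqApprox u c x := by
    rw [← integral_sub iS iP]
    congr 1 with x
    ring
  have hid := integral_deriv_mul_gradNormSq_mul_sq hu hH heq hη hηc
  have hst := integral_deriv_mul_gradNormSq_mul_sq_add_const_mul_le hu hH hstable hη hηc hc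
  simp_rw [norm_gradient_sq_eq_gradNormSq u, norm_gradient_sq_eq_sum η]
  linarith

end Equation

theorem weighted_poincare_scalar {n : ℕ}
    (u : EuclideanSpace ℝ (Fin n) → ℝ) (hu : ContDiff ℝ 3 u)
    (H : ℝ → ℝ) (hH : ContDiff ℝ 1 H)
    (heq : ∀ x, -lap u x = H (u x))
    (hstable : ∀ φ : EuclideanSpace ℝ (Fin n) → ℝ,
      ContDiff ℝ 1 φ → HasCompactSupport φ →
      (∫ x, deriv H (u x) * φ x ^ 2) ≤ ∫ x, ‖gradient φ x‖ ^ 2)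
    (η : EuclideanSpace ℝ (Fin n) → ℝ)
    (hη : ContDiff ℝ 1 η) (hηc : HasCompactSupport η) :
    (∫ x, (hessFrobSq u x - ‖gradient (fun y => ‖gradient u y‖) x‖ ^ 2) * η x ^ 2) ≤
      ∫ x, ‖gradient u x‖ ^ 2 * ‖gradient η x‖ ^ 2 := by
  have hu2 : ContDiff ℝ 2 u := hu.of_le (by norm_num)
  refine le_of_forall_pos_le_add_mul fun c hc => le_trans ?_
    (integral_hessFrobSq_sub_mul_sq_le hu hH heq hstable hη hηc hc)
  refine integral_mono_of_nonneg (ae_of_all _ fun x => ?_) ?_ (ae_of_all _ fun x => ?_)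
  · have kato := norm_gradient_norm_gradient_sq_le hu2 x
    rw [← hessFrobSq_eq_sum] at kato
    exact mul_nonneg (sub_nonneg.2 kato) (sq_nonneg _)
  · refine Continuous.integrable_of_eq_zero_of_notMem_tsupport ?_ hηc fun x hx => by
      simp [image_eq_zero_of_notMem_tsupport hx]
    exact ((continuous_hessFrobSq hu2).sub (continuous_normGradNormGradSqApprox hu2 hc)).mul
      (hη.continuous.pow 2)
  · exact mul_le_mul_of_nonneg_right
      (sub_le_sub_left (normGradNormGradSqApprox_le hu2 hc x) _) (sq_nonneg _)
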